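/- arXiv:1806.00973 — 5 statements merged into one kernel-verified Lean document; each statement's English description precedes it below -/
import Mathlib

section
/- For all real x ≥ 1, the inverse of the function h(u) = u - ln(u) on [1,∞) satisfies h⁻¹(x) ≤ x + ln(x + √(2(x-1))). -/
/-- For all real `x ≥ 1`, the inverse of `h u = u - log u` on `[1, ∞)` satisfies
`h⁻¹ x ≤ x + log (x + √(2 (x - 1)))`. -/
theorem stmt_0 (hinv : ℝ → ℝ)
    (hinv_spec : ∀ x, 1 ≤ x → 1 ≤ hinv x ∧ hinv x - Real.log (hinv x) = x) :
    ∀ x, 1 ≤ x → hinv x ≤ x + Real.log (x + Real.sqrt (2 * (x - 1))) := by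
  intro x hx
  obtain ⟨hy1, hyx⟩ := hinv_spec x hx
  set y := hinv x with hy
  set r := Real.sqrt (2 * (x - 1)) with hr
  have hr0 : 0 ≤ r := Real.sqrt_nonneg _
  have hr2 : r ^ 2 = 2 * (x - 1) := Real.sq_sqrt (by linarith)
  have hs1 : 1 ≤ x + r := by linarith
  -- key: log (x + r) ≤ r
  have hlog : Real.log (x + r) ≤ r := by
    rw [Real.log_le_iff_le_exp (by linarith)]
    calc x + r = 1 + r + r ^ 2 / 2 := by nlinarith
      _ ≤ Real.exp r := Real.quadratic_le_exp_of_nonneg hr0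
  set t := x + Real.log (x + r) with ht
  have hlog0 : 0 ≤ Real.log (x + r) := Real.log_nonneg hs1
  have ht1 : 1 ≤ t := by linarith
  -- h t ≥ x
  have hht : x ≤ t - Real.log t := by
    have : Real.log t ≤ Real.log (x + r) :=
      Real.log_le_log (by linarith) (by linarith)
    linarith
  -- monotonicity: y ≤ t
  by_contra hcon
  push_neg at hcon
  have hlt : t < y := hcon
  have : t - Real.log t < y - Real.log y := by
    have h1 : Real.log y - Real.log t = Real.log (y / t) := by
      rw [Real.log_div (by linarith) (by linarith)]
    have h2 : Real.log (y / t) < y / t - 1 := by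
      have := Real.add_one_lt_exp (x := Real.log (y / t)) (by
        intro h
        have : y / t = 1 := by
          have hyt : (0:ℝ) < y / t := by positivity
          have := Real.exp_log hyt
          rw [h, Real.exp_zero] at this
          linarith
        have : y = t := by field_simp at this; linarith
        linarith)
      have hyt : (0:ℝ) < y / t := by positivity
      rw [Real.exp_log hyt] at this
      linarith
    have h3 : y / t - 1 ≤ y - t := by
      rw [div_sub_one (by linarith), div_le_iff₀ (by linarith)]
      nlinarith
    linarith
  rw [hyx] at this
  linarith
end

section
/- The function h(u) = u - ln(u) is strictly increasing on [1,∞), and for any x ≥ 1, h⁻¹(x) = inf_{z > 1} z·(x - 1 + ln(z/(z-1))). -/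
/-!
Both parts reduce to `log t ≤ t - 1`. For `1 ≤ a < b` it gives `log (b / a) < b / a - 1 ≤ b - a`,
which is monotonicity. Applied to `t = u (z - 1) / z` it gives
`u ≤ z (u - log u - 1 + log (z / (z - 1)))` for every `z > 1`, with equality at `z = u / (u - 1)`
when `u > 1`; for `u = 1` the right-hand side is at most `z / (z - 1)`, which tends to `1`.
-/

open Real Set

theorem strictMonoOn_sub_log : StrictMonoOn (fun u : ℝ => u - log u) (Ici 1) := by
  intro a (ha : 1 ≤ a) b (_ : 1 ≤ b) hab
  have ha0 : 0 < a := by linarith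
  have hlog : log (b / a) < b / a - 1 :=
    log_lt_sub_one_of_pos (by positivity) (by rw [Ne, div_eq_one_iff_eq ha0.ne']; exact hab.ne')
  have hquot : b / a - 1 ≤ b - a := by
    rw [div_sub_one ha0.ne', div_le_iff₀ ha0]; nlinarith
  rw [log_div (by positivity) ha0.ne'] at hlog
  simp only
  linarith

theorem le_mul_sub_log_add_log_div {u z : ℝ} (hu : 0 < u) (hz : 1 < z) :
    u ≤ z * (u - log u - 1 + log (z / (z - 1))) := by
  have hz0 : 0 < z := by linarith
  have hz1 : 0 < z - 1 := by linarith
  have hlog : log (u / (z / (z - 1))) ≤ u / (z / (z - 1)) - 1 :=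
    log_le_sub_one_of_pos (by positivity)
  rw [log_div hu.ne' (by positivity)] at hlog
  have hquot : u / (z / (z - 1)) = u - u / z := by field_simp
  calc u = z * (u / z) := by field_simp
    _ ≤ z * (u - log u - 1 + log (z / (z - 1))) := by gcongr; linarith

theorem mul_sub_log_add_log_div_eq_self {u : ℝ} (hu : 1 < u) :
    u / (u - 1) * (u - log u - 1 + log (u / (u - 1) / (u / (u - 1) - 1))) = u := by
  have hu1 : u - 1 ≠ 0 := by linarith
  have hquot : u / (u - 1) / (u / (u - 1) - 1) = u := by field_simp; ring
  rw [hquot, show u - log u - 1 + log u = u - 1 by ring]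
  field_simp

theorem mul_log_div_sub_one_le {z : ℝ} (hz : 1 < z) :
    z * log (z / (z - 1)) ≤ 1 + 1 / (z - 1) := by
  have hz1 : 0 < z - 1 := by linarith
  have hlog : log (z / (z - 1)) ≤ z / (z - 1) - 1 := log_le_sub_one_of_pos (by positivity)
  calc z * log (z / (z - 1)) ≤ z * (z / (z - 1) - 1) := by gcongr
    _ = 1 + 1 / (z - 1) := by field_simp; ring

theorem isGLB_mul_sub_log_add_log_div {u : ℝ} (hu : 1 ≤ u) :
    IsGLB {y | ∃ z, 1 < z ∧ y = z * (u - log u - 1 + log (z / (z - 1)))} u := by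
  have hlower : u ∈ lowerBounds
      {y | ∃ z, 1 < z ∧ y = z * (u - log u - 1 + log (z / (z - 1)))} := by
    rintro _ ⟨z, hz, rfl⟩
    exact le_mul_sub_log_add_log_div (by linarith) hz
  refine ⟨hlower, fun b hb => ?_⟩
  rcases hu.eq_or_lt with rfl | hu
  · refine le_of_forall_pos_le_add fun ε hε => ?_
    have hz : 1 < 1 + 1 / ε := by simp [hε]
    calc b ≤ (1 + 1 / ε) * (1 - log 1 - 1 + log ((1 + 1 / ε) / (1 + 1 / ε - 1))) :=
          hb ⟨_, hz, rfl⟩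
      _ ≤ 1 + 1 / (1 + 1 / ε - 1) := by simpa using mul_log_div_sub_one_le hz
      _ = 1 + ε := by simp
  · have hz : 1 < u / (u - 1) := by rw [one_lt_div (by linarith)]; linarith
    exact hb ⟨_, hz, (mul_sub_log_add_log_div_eq_self hu).symm⟩

/-- `h u = u - log u` is strictly increasing on `[1, ∞)`, and for `x ≥ 1` its inverse
satisfies `h⁻¹ x = inf_{z > 1} z (x - 1 + log (z / (z - 1)))`. -/
theorem stmt_1 (hinv : ℝ → ℝ)
    (hinv_spec : ∀ x, 1 ≤ x → 1 ≤ hinv x ∧ hinv x - Real.log (hinv x) = x) :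
    StrictMonoOn (fun u : ℝ => u - Real.log u) (Set.Ici 1) ∧
    ∀ x, 1 ≤ x →
      hinv x = sInf {y : ℝ | ∃ z : ℝ, 1 < z ∧ y = z * (x - 1 + Real.log (z / (z - 1)))} := by
  refine ⟨strictMonoOn_sub_log, fun x hx => ?_⟩
  obtain ⟨hu, hux⟩ := hinv_spec x hx
  have hglb := isGLB_mul_sub_log_add_log_div hu
  rw [hux] at hglb
  exact (hglb.csInf_eq ⟨_, 2, one_lt_two, rfl⟩).symm
end

section
/- Let A ∈ ℝ and B > 0, and define g(λ) = Aλ - ln(1 - λB) for λ ∈ [0, 1/B). If (u - A)/B ≥ 1, then sup_{λ ∈ [0,1/B)} (λu - g(λ)) = h((u-A)/B) - 1, where h(v) = v - ln(v); the supremum is attained at λ* = 1/B - 1/(u - A). -/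
/-!
Substituting `t = 1 - λB ∈ (0, 1]` and `v = (u - A)/B` turns `λu - g(λ)` into `v(1 - t) + log t`.
The bound `log (t v) ≤ t v - 1` gives `v(1 - t) + log t ≤ v - log v - 1`, with equality at
`t v = 1`, i.e. at `λ = 1/B - 1/(u - A)`; this `λ` is admissible exactly because `v ≥ 1`.
-/

open Real

lemma mul_one_sub_add_log_le {v t : ℝ} (hv : 0 < v) (ht : 0 < t) :
    v * (1 - t) + log t ≤ v - log v - 1 := by
  have h := log_le_sub_one_of_pos (mul_pos ht hv)
  rw [log_mul ht.ne' hv.ne'] at h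
  linarith

lemma mul_one_sub_inv_add_log_inv {v : ℝ} (hv : v ≠ 0) :
    v * (1 - v⁻¹) + log v⁻¹ = v - log v - 1 := by
  rw [log_inv, mul_sub, mul_inv_cancel₀ hv]
  ring

lemma mul_sub_sub_log_one_sub_eq (A B u l : ℝ) (hB : B ≠ 0) :
    l * u - (A * l - log (1 - l * B)) = (u - A) / B * (1 - (1 - l * B)) + log (1 - l * B) := by
  field_simp
  ring

lemma one_sub_sub_one_div_mul_eq_inv (A B u : ℝ) (hB : B ≠ 0) (hc : u - A ≠ 0) :
    1 - (1 / B - 1 / (u - A)) * B = ((u - A) / B)⁻¹ := by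
  field_simp
  ring

/-- Fenchel conjugate computation: with `g λ = A λ - log (1 - λ B)` on `[0, 1/B)` and
`(u - A)/B ≥ 1`, `sup_{λ ∈ [0,1/B)} (λ u - g λ) = h((u-A)/B) - 1` where `h v = v - log v`,
and the supremum is attained at `λ* = 1/B - 1/(u - A)`. -/
theorem stmt_3 (A B u : ℝ) (hB : 0 < B) (hu : 1 ≤ (u - A) / B) :
    IsGreatest
      {y : ℝ | ∃ l : ℝ, 0 ≤ l ∧ l < 1 / B ∧
        y = l * u - (A * l - Real.log (1 - l * B))}
      (((u - A) / B - Real.log ((u - A) / B)) - 1) ∧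
    (0 ≤ 1 / B - 1 / (u - A) ∧ 1 / B - 1 / (u - A) < 1 / B) ∧
    (1 / B - 1 / (u - A)) * u -
        (A * (1 / B - 1 / (u - A)) - Real.log (1 - (1 / B - 1 / (u - A)) * B)) =
      ((u - A) / B - Real.log ((u - A) / B)) - 1 := by
  have hBc : B ≤ u - A := by simpa using (le_div_iff₀ hB).mp hu
  have hc : 0 < u - A := hB.trans_le hBc
  have hv : 0 < (u - A) / B := div_pos hc hB
  have hadm : 0 ≤ 1 / B - 1 / (u - A) ∧ 1 / B - 1 / (u - A) < 1 / B :=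
    ⟨sub_nonneg.mpr (one_div_le_one_div_of_le hB hBc), sub_lt_self _ (one_div_pos.mpr hc)⟩
  have hval : (1 / B - 1 / (u - A)) * u -
      (A * (1 / B - 1 / (u - A)) - log (1 - (1 / B - 1 / (u - A)) * B)) =
      (u - A) / B - log ((u - A) / B) - 1 := by
    rw [mul_sub_sub_log_one_sub_eq A B u _ hB.ne', one_sub_sub_one_div_mul_eq_inv A B u hB.ne' hc.ne',
      mul_one_sub_inv_add_log_inv hv.ne']
  refine ⟨⟨⟨_, hadm.1, hadm.2, hval.symm⟩, ?_⟩, hadm, hval⟩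
  rintro y ⟨l, -, hl, rfl⟩
  have ht : 0 < 1 - l * B := sub_pos.mpr (by simpa using (lt_div_iff₀ hB).mp hl)
  rw [mul_sub_sub_log_one_sub_eq A B u l hB.ne']
  exact mul_one_sub_add_log_le hv ht
end

section
/- Let φ_μ(λ) = b(ḃ⁻¹(μ) + λ) - b(ḃ⁻¹(μ)) be the cumulant generating function of the exponential-family distribution with mean μ. Then μ ↦ φ_μ(λ) is nonincreasing in μ when λ < 0 and nondecreasing in μ when λ > 0. -/
/-!
Convexity of `b` makes both sides monotone in the right way: the increment `t ↦ b (t + λ) - b t`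
over a step of fixed length `λ` is nondecreasing for `λ ≥ 0` and nonincreasing for `λ ≤ 0`
(secant slopes of a convex function grow), and `θ = (b')⁻¹` is monotone because `b'` is.
The theorem is the composition of the two.
-/

open Set Function

section Increment

variable {𝕜 : Type*} [Field 𝕜] [LinearOrder 𝕜] [IsStrictOrderedRing 𝕜] {f : 𝕜 → 𝕜}
  {c : 𝕜}

theorem ConvexOn.monotone_add_const_sub (hf : ConvexOn 𝕜 univ f) (hc : 0 ≤ c) :
    Monotone fun t => f (t + c) - f t := by
  rcases hc.eq_or_lt with rfl | hc
  · simp [monotone_const]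
  intro t s hts
  -- slope over `[t, t + c]` ≤ slope over `[t, s + c]` ≤ slope over `[s, s + c]`
  have h₁ : (f (t + c) - f t) / (t + c - t) ≤ (f (s + c) - f t) / (s + c - t) :=
    hf.secant_mono (mem_univ _) (mem_univ _) (mem_univ _) (by linarith) (by linarith)
      (by linarith)
  have h₂ : (f t - f (s + c)) / (t - (s + c)) ≤ (f s - f (s + c)) / (s - (s + c)) :=
    hf.secant_mono (mem_univ _) (mem_univ _) (mem_univ _) (by linarith) (by linarith) hts
  rw [← neg_div_neg_eq, neg_sub, neg_sub, ← neg_div_neg_eq (f s - _), neg_sub, neg_sub,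
    add_sub_cancel_left] at h₂
  rw [add_sub_cancel_left] at h₁
  exact (div_le_div_iff_of_pos_right hc).1 (h₁.trans h₂)

theorem ConvexOn.antitone_add_const_sub (hf : ConvexOn 𝕜 univ f) (hc : c ≤ 0) :
    Antitone fun t => f (t + c) - f t := by
  intro t s hts
  have := hf.monotone_add_const_sub (neg_nonneg.2 hc) (show t + c ≤ s + c by linarith)
  simp only [add_neg_cancel_right] at this
  linarith

end Increment

theorem Monotone.monotone_of_leftInverse {α β : Type*} [PartialOrder α] [LinearOrder β]
    {f : β → α} {g : α → β} (hf : Monotone f) (hfg : LeftInverse f g) : Monotone g := by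
  intro x y hxy
  by_contra! hlt
  have hyx : y ≤ x := by simpa only [hfg y, hfg x] using hf hlt.le
  exact (le_antisymm hxy hyx ▸ hlt).false

/-- Monotonicity of the exponential-family cumulant generating function in the mean:
with `θ = (b')⁻¹` mapping mean to natural parameters, `μ ↦ φ_μ(λ) = b(θ(μ) + λ) - b(θ(μ))`
is nonincreasing when `λ < 0` and nondecreasing when `λ > 0`. -/
theorem stmt_10 (b : ℝ → ℝ) (hconv : StrictConvexOn ℝ Set.univ b)
    (hdiff : Differentiable ℝ b) (θ : ℝ → ℝ) (hθ : ∀ μ, deriv b (θ μ) = μ)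
    (lam : ℝ) :
    (lam < 0 → Antitone (fun μ => b (θ μ + lam) - b (θ μ))) ∧
    (0 < lam → Monotone (fun μ => b (θ μ + lam) - b (θ μ))) := by
  have hb'_mono : Monotone (deriv b) :=
    monotoneOn_univ.1 (hconv.convexOn.monotoneOn_deriv fun x _ => hdiff x)
  have hθ_mono : Monotone θ := hb'_mono.monotone_of_leftInverse hθ
  exact ⟨fun hlam => (hconv.convexOn.antitone_add_const_sub hlam.le).comp_monotone hθ_mono,
    fun hlam => (hconv.convexOn.monotone_add_const_sub hlam.le).comp hθ_mono⟩
end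

section
/- Let t_0 ≥ 0, c > 0, and f : ℝ₊ → ℝ with f(δ) = ln(1/δ) + o(ln(1/δ)) as δ → 0. Define τ_δ = inf{t ∈ ℕ : t ≥ t_0 and t·c ≥ f(δ) + ln(t)}. Then limsup_{δ→0} τ_δ / ln(1/δ) ≤ 1/c. -/
/-- If `f δ = log(1/δ) + o(log(1/δ))` as `δ → 0` and
`τ_δ = inf {t ∈ ℕ : t ≥ t₀ and t c ≥ f δ + log t}`, then
`limsup_{δ → 0} τ_δ / log(1/δ) ≤ 1/c`. -/
theorem stmt_15 (t0 c : ℝ) (ht0 : 0 ≤ t0) (hc : 0 < c) (f : ℝ → ℝ)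
    (hf : Filter.Tendsto (fun δ => f δ / Real.log (1 / δ))
      (nhdsWithin 0 (Set.Ioi 0)) (nhds 1)) :
    Filter.limsup
      (fun δ => ((sInf {t : ℕ | t0 ≤ (t : ℝ) ∧ f δ + Real.log t ≤ (t : ℝ) * c} : ℕ) : ℝ) /
        Real.log (1 / δ))
      (nhdsWithin 0 (Set.Ioi 0)) ≤ 1 / c := by
  have hL : Filter.Tendsto (fun δ : ℝ => Real.log (1 / δ)) (nhdsWithin 0 (Set.Ioi 0))
      Filter.atTop := by
    have h1 : Filter.Tendsto Real.log (nhdsWithin 0 (Set.Ioi 0)) Filter.atBot :=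
      Real.tendsto_log_nhdsGT_zero
    have h2 : Filter.Tendsto (fun δ : ℝ => -Real.log δ) (nhdsWithin 0 (Set.Ioi 0))
        Filter.atTop := Filter.tendsto_neg_atBot_atTop.comp h1
    simpa only [one_div, Real.log_inv] using h2
  have hpos : ∀ᶠ δ in nhdsWithin 0 (Set.Ioi 0), (0:ℝ) < Real.log (1/δ) :=
    hL.eventually (Filter.eventually_gt_atTop 0)
  have hcob : Filter.IsCoboundedUnder (· ≤ ·) (nhdsWithin 0 (Set.Ioi 0))
      (fun δ => ((sInf {t : ℕ | t0 ≤ (t : ℝ) ∧ f δ + Real.log t ≤ (t : ℝ) * c} : ℕ) : ℝ) /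
        Real.log (1 / δ)) := by
    haveI : (nhdsWithin (0:ℝ) (Set.Ioi 0)).NeBot := nhdsGT_neBot 0
    refine Filter.isCoboundedUnder_le_of_eventually_le (nhdsWithin 0 (Set.Ioi 0))
      (x := (0:ℝ)) ?_
    filter_upwards [hpos] with δ hδ
    positivity
  refine le_of_forall_pos_le_add fun ε hε => ?_
  set a : ℝ := 1/c + ε/2 with ha
  have hapos : 0 < a := by positivity
  -- log bound eventually in atTop
  have hlog : ∀ᶠ x in Filter.atTop, Real.log (a*x+1) ≤ (c*ε/4)*x := by
    have hten : Filter.Tendsto (fun x : ℝ => a*x+1) Filter.atTop Filter.atTop := by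
      apply Filter.tendsto_atTop_add_const_right
      exact Filter.Tendsto.const_mul_atTop hapos Filter.tendsto_id
    have h1 : (fun x : ℝ => Real.log (a*x+1)) =o[Filter.atTop] (fun x => a*x+1) :=
      Real.isLittleO_log_id_atTop.comp_tendsto hten
    have h2 : (fun x : ℝ => a*x+1) =O[Filter.atTop] (fun x : ℝ => x) := by
      rw [Asymptotics.isBigO_iff]
      refine ⟨a+1, ?_⟩
      filter_upwards [Filter.eventually_ge_atTop (1:ℝ)] with x hx
      have hx0 : (0:ℝ) ≤ x := by linarith
      rw [Real.norm_of_nonneg (by positivity), Real.norm_of_nonneg hx0]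
      nlinarith
    have h3 := (h1.trans_isBigO h2).def (show (0:ℝ) < c*ε/4 by positivity)
    filter_upwards [h3, Filter.eventually_ge_atTop (0:ℝ)] with x h hx
    calc Real.log (a*x+1) ≤ |Real.log (a*x+1)| := le_abs_self _
      _ ≤ (c*ε/4) * |x| := by simpa [Real.norm_eq_abs] using h
      _ = (c*ε/4)*x := by rw [abs_of_nonneg hx]
  have hEx : ∀ᶠ x in Filter.atTop,
      Real.log (a*x+1) ≤ (c*ε/4)*x ∧ t0 ≤ a*x ∧ 0 < x ∧ 1/x ≤ ε/2 := by
    filter_upwards [hlog, Filter.eventually_ge_atTop (t0/a),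
      Filter.eventually_gt_atTop (0:ℝ), Filter.eventually_ge_atTop (2/ε)] with x h1 h2 h3 h4
    refine ⟨h1, ?_, h3, ?_⟩
    · rw [div_le_iff₀ hapos] at h2; linarith [h2]
    · calc 1/x ≤ 1/(2/ε) := one_div_le_one_div_of_le (by positivity) h4
        _ = ε/2 := by rw [one_div_div]
  have hfev : ∀ᶠ δ in nhdsWithin 0 (Set.Ioi 0),
      f δ / Real.log (1/δ) < 1 + c*ε/4 :=
    hf.eventually_lt_const (by nlinarith)
  have key : ∀ᶠ δ in nhdsWithin 0 (Set.Ioi 0),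
      ((sInf {t : ℕ | t0 ≤ (t : ℝ) ∧ f δ + Real.log t ≤ (t : ℝ) * c} : ℕ) : ℝ) /
        Real.log (1 / δ) ≤ 1/c + ε := by
    filter_upwards [hL.eventually hEx, hfev] with δ hδ hfδ
    set x := Real.log (1/δ) with hx
    obtain ⟨hlg, ht0x, hxpos, hinv⟩ := hδ
    set t : ℕ := ⌈a*x⌉₊ with ht
    have htx : a*x ≤ (t:ℝ) := Nat.le_ceil _
    have htx1 : (t:ℝ) ≤ a*x + 1 := (Nat.ceil_lt_add_one (by positivity)).le
    have htpos : (0:ℝ) < (t:ℝ) := lt_of_lt_of_le (by positivity) htx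
    have hfle : f δ ≤ x + (c*ε/4)*x := by
      rw [div_lt_iff₀ hxpos] at hfδ
      nlinarith
    have hltt : Real.log t ≤ (c*ε/4)*x :=
      le_trans (Real.log_le_log htpos htx1) hlg
    have hacx : a*x*c = x + 2*((c*ε/4)*x) := by
      rw [ha]; field_simp; ring
    have htc : x + 2*((c*ε/4)*x) ≤ (t:ℝ)*c := by
      rw [← hacx]
      exact mul_le_mul_of_nonneg_right htx hc.le
    have hmem : t ∈ {t : ℕ | t0 ≤ (t : ℝ) ∧ f δ + Real.log t ≤ (t : ℝ) * c} :=
      ⟨le_trans ht0x htx, by linarith⟩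
    have hInf : ((sInf {t : ℕ | t0 ≤ (t : ℝ) ∧ f δ + Real.log t ≤ (t : ℝ) * c} : ℕ) : ℝ)
        ≤ (t:ℝ) := by exact_mod_cast Nat.sInf_le hmem
    calc ((sInf {t : ℕ | t0 ≤ (t : ℝ) ∧ f δ + Real.log t ≤ (t : ℝ) * c} : ℕ) : ℝ) / x
        ≤ (t:ℝ)/x := div_le_div_of_nonneg_right hInf hxpos.le
      _ ≤ (a*x+1)/x := by apply div_le_div_of_nonneg_right htx1 hxpos.le
      _ = a + 1/x := by field_simp
      _ ≤ 1/c + ε := by rw [ha]; linarith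
  exact Filter.limsup_le_of_le hcob key
end
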